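/- Let β > 1, 0 < θ < β/(β-1), 0 < ξ < (β/θ)^{1/(1-β+β/θ)}, f(x) = sgn(x)|x|^β, and g(t) = (ξ^{-β/θ} + t)^{-θ}·(1 - (θ/β)(ξ^{-β/θ} + t)^{-θ/β - 1 + θ}) for t ≥ 0, which is positive for all t ≥ 0. Then the unique continuous solution of x'(t) = -f(x(t)) + g(t), t > 0, x(0) = ξ, is x(t) = (ξ^{-β/θ} + t)^{-θ/β}; moreover g ∈ RV_∞(-θ), lim_{t→∞} g(t)/(f∘F⁻¹)(t) = +∞, x(t) → 0 as t → ∞, and lim_{t→∞} f(x(t))/g(t) = 1. -/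

import Mathlib

open Filter Real Set Topology MeasureTheory

noncomputable section

/-- A function `f : (0,∞) → (0,∞)` is regularly varying at `0` with index `β` if
`f(λx)/f(x) → λ^β` as `x → 0⁺` for every `λ > 0`. -/
def RVat0 (f : ℝ → ℝ) (β : ℝ) : Prop :=
  ∀ lam : ℝ, 0 < lam →
    Tendsto (fun x => f (lam * x) / f x) (nhdsWithin 0 (Set.Ioi 0)) (nhds (lam ^ β))

/-- A function `h : (0,∞) → (0,∞)` is regularly varying at `∞` with index `α` if
`h(λt)/h(t) → λ^α` as `t → ∞` for every `λ > 0`. -/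
def RVatInf (h : ℝ → ℝ) (α : ℝ) : Prop :=
  ∀ lam : ℝ, 0 < lam →
    Tendsto (fun t => h (lam * t) / h t) atTop (nhds (lam ^ α))

/-- A continuous solution of the perturbed ODE `x'(t) = -f(x(t)) + g(t)`, `t > 0`,
with initial condition `x(0) = ξ`. -/
def IsSol (f g : ℝ → ℝ) (ξ : ℝ) (x : ℝ → ℝ) : Prop :=
  ContinuousOn x (Set.Ici 0) ∧ x 0 = ξ ∧
    ∀ t : ℝ, 0 < t → HasDerivAt x (-f (x t) + g t) t

/-!
Write `s = ξ^(-β/θ) + t` and `e = θ - θ/β - 1`; the hypothesis `θ < β/(β-1)` is exactly `e < 0`.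
Then `f(x) = s^(-θ)` and `g = s^(-θ) (1 - (θ/β) s^e)`, so `x' = -f(x) + g` is a direct
computation, `g/f(x) → 1`, and `g` is regularly varying with index `-θ`. Positivity of `g`
reduces, since `s^e` is largest at `t = 0`, to `ξ^(1-β+β/θ) < β/θ`. Uniqueness needs no Lipschitz
bound: `f` is increasing, so `(y - x)²` is nonincreasing along any two solutions. Finally
`F(y) = (y^(1-β) - 1)/(β-1)` gives `f(F⁻¹(t)) = (1 + (β-1)t)^(-β/(β-1))`, which decays faster
than `s^(-θ)`.
-/

theorem Real.sign_mul_abs_rpow_of_pos {β v : ℝ} (hv : 0 < v) : Real.sign v * |v| ^ β = v ^ β := by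
  rw [Real.sign_of_pos hv, abs_of_pos hv, one_mul]

theorem Real.sign_mul_abs_rpow_of_neg {β v : ℝ} (hv : v < 0) :
    Real.sign v * |v| ^ β = -(-v) ^ β := by
  rw [Real.sign_of_neg hv, abs_of_neg hv, neg_one_mul]

theorem Real.monotone_sign_mul_abs_rpow {β : ℝ} (hβ : 0 < β) :
    Monotone fun v : ℝ => Real.sign v * |v| ^ β := by
  have hcases : ∀ v : ℝ, Real.sign v * |v| ^ β = if 0 ≤ v then v ^ β else -(-v) ^ β := by
    intro v
    rcases lt_trichotomy v 0 with hv | rfl | hv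
    · simp [Real.sign_mul_abs_rpow_of_neg hv, hv.not_ge]
    · simp [Real.zero_rpow hβ.ne']
    · simp [Real.sign_mul_abs_rpow_of_pos hv, hv.le]
  intro a b hab
  simp only [hcases]
  split_ifs with ha hb hb
  · exact Real.rpow_le_rpow ha hab hβ.le
  · exact absurd (ha.trans hab) hb
  · linarith [Real.rpow_nonneg (neg_nonneg.2 (not_le.1 ha).le) β, Real.rpow_nonneg hb β]
  · exact neg_le_neg (Real.rpow_le_rpow (by linarith) (by linarith) hβ.le)

theorem IsSol.eqOn_of_monotone {f g : ℝ → ℝ} {ξ : ℝ} {x y : ℝ → ℝ} (hf : Monotone f)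
    (hx : IsSol f g ξ x) (hy : IsSol f g ξ y) : EqOn x y (Ici 0) := by
  obtain ⟨hxc, hx0, hx'⟩ := hx
  obtain ⟨hyc, hy0, hy'⟩ := hy
  have hanti : AntitoneOn (fun t => (y t - x t) ^ 2) (Ici 0) := by
    refine antitoneOn_of_hasDerivWithinAt_nonpos (convex_Ici 0) ((hyc.sub hxc).pow 2)
      (fun t ht => ?_) (f' := fun t => 2 * (y t - x t) * (-(f (y t) - f (x t)))) (fun t ht => ?_)
    · rw [interior_Ici] at ht
      exact ((((hy' t ht).sub (hx' t ht)).pow 2).congr_deriv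
        (by simp only [Pi.sub_apply]; ring)).hasDerivWithinAt
    · rcases le_total (x t) (y t) with h | h <;> nlinarith [hf h]
  intro t ht
  have h : (y t - x t) ^ 2 ≤ 0 := by simpa [hx0, hy0] using hanti self_mem_Ici ht ht
  exact (sub_eq_zero.1 ((pow_eq_zero_iff two_ne_zero).1 (le_antisymm h (sq_nonneg _)))).symm

theorem integral_one_div_sign_mul_abs_rpow {β y : ℝ} (hβ : β ≠ 1) (hy : 0 < y) :
    ∫ u in y..1, 1 / (Real.sign u * |u| ^ β) = (y ^ (1 - β) - 1) / (β - 1) := by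
  have hcongr : EqOn (fun u => 1 / (Real.sign u * |u| ^ β)) (fun u => u ^ (-β)) (uIcc y 1) := by
    intro u hu
    have hu0 : 0 < u := (lt_min hy one_pos).trans_le hu.1
    simp only [Real.sign_mul_abs_rpow_of_pos hu0, one_div, Real.rpow_neg hu0.le]
  have hβ' : -β ≠ -1 := by contrapose! hβ; linarith
  have hβ'' : β - 1 ≠ 0 := sub_ne_zero.2 hβ
  rw [intervalIntegral.integral_congr hcongr,
    integral_rpow (Or.inr ⟨hβ', notMem_uIcc_of_lt hy one_pos⟩), Real.one_rpow,
    show -β + 1 = 1 - β by ring, div_eq_div_iff (by contrapose! hβ; linarith) hβ'']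
  ring

theorem sign_mul_abs_rpow_eq_of_integral_eq {β y t : ℝ} (hβ : β ≠ 1) (hy : 0 < y)
    (h : ∫ u in y..1, 1 / (Real.sign u * |u| ^ β) = t) :
    Real.sign y * |y| ^ β = (1 + (β - 1) * t) ^ (-(β / (β - 1))) := by
  have hβ' : β - 1 ≠ 0 := sub_ne_zero.2 hβ
  have hpow : y ^ (1 - β) = 1 + (β - 1) * t := by
    rw [← h, integral_one_div_sign_mul_abs_rpow hβ hy]; field_simp; ring
  rw [Real.sign_mul_abs_rpow_of_pos hy, ← hpow, ← Real.rpow_mul hy.le]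
  congr 1
  field_simp
  ring

theorem tendsto_add_mul_div_add_atTop (a b c : ℝ) :
    Tendsto (fun t => (a + b * t) / (c + t)) atTop (𝓝 b) := by
  have hinv : Tendsto (fun t : ℝ => t⁻¹) atTop (𝓝 0) := tendsto_inv_atTop_zero
  have h := ((hinv.const_mul a).add_const b).div ((hinv.const_mul c).add_const 1) (by simp)
  simp only [mul_zero, zero_add, div_one] at h
  refine h.congr' ?_
  filter_upwards [eventually_gt_atTop 0] with t ht
  simp only [Pi.div_apply]
  field_simp

theorem tendsto_one_sub_mul_add_rpow_atTop {a c e : ℝ} (he : e < 0) :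
    Tendsto (fun t => 1 - a * (c + t) ^ e) atTop (𝓝 1) := by
  have h := (((tendsto_rpow_neg_atTop (neg_pos.2 he)).comp
    (tendsto_atTop_add_const_left _ c tendsto_id)).const_mul a).const_sub 1
  simp only [Function.comp_def, neg_neg, mul_zero, sub_zero] at h
  exact h

theorem tendsto_rpow_div_rpow_atTop {a b c q θ : ℝ} (hb : 0 < b) (hθq : θ < q) :
    Tendsto (fun t => (a + b * t) ^ q / (c + t) ^ θ) atTop atTop := by
  have hlin : Tendsto (fun t => a + b * t) atTop atTop :=
    tendsto_atTop_add_const_left _ a (tendsto_id.const_mul_atTop hb)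
  have hratio := (Real.continuousAt_rpow_const b θ (Or.inl hb.ne')).tendsto.comp
    (tendsto_add_mul_div_add_atTop a b c)
  have hgrow := (tendsto_rpow_atTop (sub_pos.2 hθq)).comp hlin
  refine (hratio.pos_mul_atTop (Real.rpow_pos_of_pos hb θ) hgrow).congr' ?_
  filter_upwards [hlin.eventually_gt_atTop 0, eventually_gt_atTop (-c)] with t hlt hct
  rw [Function.comp_apply, Function.comp_apply, Real.div_rpow hlt.le (by linarith),
    Real.rpow_sub hlt, div_mul_div_comm, mul_comm ((c + t) ^ θ),
    mul_div_mul_left _ _ (Real.rpow_pos_of_pos hlt θ).ne']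

theorem RVatInf.congr {h h' : ℝ → ℝ} {α : ℝ} (hh : RVatInf h α) (heq : h =ᶠ[atTop] h') :
    RVatInf h' α := fun lam hlam => by
  refine (hh lam hlam).congr' ?_
  filter_upwards [heq, (tendsto_id.const_mul_atTop hlam).eventually heq] with t ht hlt
  rw [ht]
  exact congrArg (· / h' t) hlt

theorem RVatInf.mul_tendsto {h k : ℝ → ℝ} {α L : ℝ} (hh : RVatInf h α)
    (hk : Tendsto k atTop (𝓝 L)) (hL : L ≠ 0) : RVatInf (fun t => h t * k t) α := by
  intro lam hlam
  have hk' : Tendsto (fun t => k (lam * t) / k t) atTop (𝓝 1) := by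
    simpa [div_self hL, Function.comp_def, Pi.div_def] using
      (hk.comp (tendsto_id.const_mul_atTop hlam)).div hk hL
  simpa [mul_div_mul_comm] using (hh lam hlam).mul hk'

theorem rvAtInf_add_rpow (c α : ℝ) : RVatInf (fun t => (c + t) ^ α) α := by
  intro lam hlam
  have h := (Real.continuousAt_rpow_const lam α (Or.inl hlam.ne')).tendsto.comp
    (tendsto_add_mul_div_add_atTop c lam c)
  refine h.congr' ?_
  filter_upwards
    [(tendsto_atTop_add_const_left _ c (tendsto_id.const_mul_atTop hlam)).eventually_ge_atTop 0,
    (tendsto_atTop_add_const_left _ c tendsto_id).eventually_ge_atTop 0] with t hlt ht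
  exact Real.div_rpow hlt ht α

theorem neg_div_sub_one_add_neg {β θ : ℝ} (hβ : 1 < β) (hθ : θ < β / (β - 1)) :
    -(θ / β) - 1 + θ < 0 := by
  have hθ' : θ * (β - 1) < β := (lt_div_iff₀ (by linarith)).1 hθ
  have h : -(θ / β) - 1 + θ = (θ * (β - 1) - β) / β := by field_simp; ring
  rw [h]
  exact div_neg_of_neg_of_pos (by linarith) (by linarith)

theorem div_mul_add_rpow_lt_one {β θ ξ t : ℝ} (hβ : 1 < β) (hθ : θ ∈ Ioo 0 (β / (β - 1)))
    (hξ : ξ ∈ Ioo 0 ((β / θ) ^ ((1 : ℝ) / (1 - β + β / θ)))) (ht : 0 ≤ t) :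
    θ / β * (ξ ^ (-(β / θ)) + t) ^ (-(θ / β) - 1 + θ) < 1 := by
  obtain ⟨hθ0, hθq⟩ := hθ
  have hβ0 : 0 < β := by linarith
  have he := neg_div_sub_one_add_neg hβ hθq
  have hp : 0 < 1 - β + β / θ := by
    have hθ' : θ * (β - 1) < β := (lt_div_iff₀ (by linarith)).1 hθq
    have h : 1 - β + β / θ = (β - θ * (β - 1)) / θ := by field_simp; ring
    rw [h]
    exact div_pos (by linarith) hθ0
  have hc : 0 < ξ ^ (-(β / θ)) := Real.rpow_pos_of_pos hξ.1 _
  have hcξ : (ξ ^ (-(β / θ))) ^ (-(θ / β) - 1 + θ) = ξ ^ (1 - β + β / θ) := by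
    rw [← Real.rpow_mul hξ.1.le]
    congr 1
    field_simp
    ring
  have hξp : ξ ^ (1 - β + β / θ) < β / θ := by
    simpa [← Real.rpow_mul (div_pos hβ0 hθ0).le, hp.ne'] using Real.rpow_lt_rpow hξ.1.le hξ.2 hp
  calc θ / β * (ξ ^ (-(β / θ)) + t) ^ (-(θ / β) - 1 + θ)
      ≤ θ / β * (ξ ^ (-(β / θ))) ^ (-(θ / β) - 1 + θ) :=
        mul_le_mul_of_nonneg_left
          (Real.rpow_le_rpow_of_nonpos hc (le_add_of_nonneg_right ht) he.le) (by positivity)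
    _ < θ / β * (β / θ) := by rw [hcξ]; gcongr
    _ = 1 := by field_simp

theorem rpow_neg_div_rpow {β θ s : ℝ} (hβ : β ≠ 0) (hs : 0 ≤ s) :
    (s ^ (-(θ / β))) ^ β = s ^ (-θ) := by
  rw [← Real.rpow_mul hs, neg_mul, div_mul_cancel₀ θ hβ]

theorem isSol_add_rpow {β θ ξ : ℝ} (hβ : 0 < β) (hθ : 0 < θ) (hξ : 0 < ξ) {g x : ℝ → ℝ}
    (hg : ∀ t : ℝ, 0 ≤ t → g t =
      (ξ ^ (-(β / θ)) + t) ^ (-θ) *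
        (1 - (θ / β) * (ξ ^ (-(β / θ)) + t) ^ (-(θ / β) - 1 + θ)))
    (hxdef : ∀ t : ℝ, 0 ≤ t → x t = (ξ ^ (-(β / θ)) + t) ^ (-(θ / β))) :
    IsSol (fun y => Real.sign y * |y| ^ β) g ξ x := by
  set c := ξ ^ (-(β / θ))
  have hct : ∀ t : ℝ, 0 ≤ t → 0 < c + t := fun t ht => by positivity
  refine ⟨?_, ?_, fun t ht => ?_⟩
  · exact ((continuous_const.add continuous_id).continuousOn.rpow_const
      fun t ht => Or.inl (hct t ht).ne').congr fun t ht => hxdef t ht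
  · rw [hxdef 0 le_rfl, add_zero, ← Real.rpow_mul hξ.le, neg_mul_neg,
      div_mul_div_cancel₀ hθ.ne', div_self hβ.ne', Real.rpow_one]
  · have hxt : x =ᶠ[𝓝 t] fun τ => (c + τ) ^ (-(θ / β)) :=
      eventually_of_mem (Ioi_mem_nhds ht) fun τ hτ => hxdef τ (le_of_lt hτ)
    refine ((((hasDerivAt_id t).const_add c).rpow_const (Or.inl (hct t ht.le).ne')
      ).congr_of_eventuallyEq hxt).congr_deriv ?_
    have hpos := hct t ht.le
    have hexp : (c + t) ^ (-θ) * (c + t) ^ (-(θ / β) - 1 + θ) = (c + t) ^ (-(θ / β) - 1) := by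
      rw [← Real.rpow_add hpos]; ring_nf
    dsimp only [id]
    rw [hxdef t ht.le, hg t ht.le, Real.sign_mul_abs_rpow_of_pos (Real.rpow_pos_of_pos hpos _),
      rpow_neg_div_rpow hβ.ne' hpos.le]
    linear_combination (θ / β) * hexp

/-- Example 3.5: with `β > 1`, `0 < θ < β/(β-1)`, `0 < ξ < (β/θ)^{1/(1-β+β/θ)}`,
`f(x) = sgn(x)|x|^β` and the given positive perturbation `g`, the unique continuous
solution of `x' = -f(x) + g`, `x(0) = ξ`, is `x(t) = (ξ^{-β/θ}+t)^{-θ/β}`; moreover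
`g ∈ RV_∞(-θ)`, `g(t)/(f∘F⁻¹)(t) → +∞`, `x(t) → 0` and `f(x(t))/g(t) → 1`. -/
theorem stmt_18 (β θ ξ : ℝ) (hβ : 1 < β) (hθ : θ ∈ Set.Ioo (0:ℝ) (β / (β - 1)))
    (hξ : ξ ∈ Set.Ioo (0:ℝ) ((β / θ) ^ ((1:ℝ) / (1 - β + β / θ))))
    (f g F Finv x : ℝ → ℝ)
    (hf : ∀ y : ℝ, f y = Real.sign y * |y| ^ β)
    (hg : ∀ t : ℝ, 0 ≤ t → g t =
      (ξ ^ (-(β / θ)) + t) ^ (-θ) *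
        (1 - (θ / β) * (ξ ^ (-(β / θ)) + t) ^ (-(θ / β) - 1 + θ)))
    (hxdef : ∀ t : ℝ, 0 ≤ t → x t = (ξ ^ (-(β / θ)) + t) ^ (-(θ / β)))
    (hF : ∀ y : ℝ, 0 < y → F y = ∫ u in y..(1:ℝ), 1 / f u)
    (hFinv : ∀ t : ℝ, 0 ≤ t → 0 < Finv t ∧ F (Finv t) = t) :
    (∀ t : ℝ, 0 ≤ t → 0 < g t) ∧
    IsSol f g ξ x ∧
    (∀ y : ℝ → ℝ, IsSol f g ξ y → ∀ t : ℝ, 0 ≤ t → y t = x t) ∧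
    RVatInf g (-θ) ∧
    Tendsto (fun t => g t / f (Finv t)) atTop atTop ∧
    Tendsto x atTop (nhds 0) ∧
    Tendsto (fun t => f (x t) / g t) atTop (nhds 1) := by
  obtain rfl : f = fun y => Real.sign y * |y| ^ β := funext hf
  have hβ0 : 0 < β := by linarith
  set c := ξ ^ (-(β / θ))
  have hct : ∀ t : ℝ, 0 ≤ t → 0 < c + t := fun t ht =>
    add_pos_of_pos_of_nonneg (Real.rpow_pos_of_pos hξ.1 _) ht
  have hk := tendsto_one_sub_mul_add_rpow_atTop (a := θ / β) (c := c)
    (neg_div_sub_one_add_neg hβ hθ.2)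
  have hsol := isSol_add_rpow hβ0 hθ.1 hξ.1 hg hxdef
  refine ⟨fun t ht => ?_, hsol,
    fun y hy t ht => (hsol.eqOn_of_monotone (Real.monotone_sign_mul_abs_rpow hβ0) hy ht).symm,
    ((rvAtInf_add_rpow c (-θ)).mul_tendsto hk one_ne_zero).congr
      ((eventually_ge_atTop 0).mono fun t ht => (hg t ht).symm), ?_, ?_, ?_⟩
  · rw [hg t ht]
    exact mul_pos (Real.rpow_pos_of_pos (hct t ht) _)
      (sub_pos.2 (div_mul_add_rpow_lt_one hβ hθ hξ ht))
  · refine ((tendsto_rpow_div_rpow_atTop (a := 1) (c := c) (sub_pos.2 hβ) hθ.2).atTop_mul_pos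
      one_pos hk).congr' ?_
    filter_upwards [eventually_ge_atTop 0] with t ht
    obtain ⟨hpos, hFt⟩ := hFinv t ht
    rw [hg t ht, sign_mul_abs_rpow_eq_of_integral_eq hβ.ne' hpos ((hF _ hpos).symm.trans hFt),
      Real.rpow_neg (hct t ht).le, Real.rpow_neg (by nlinarith)]
    field_simp
  · refine ((tendsto_rpow_neg_atTop (div_pos hθ.1 hβ0)).comp
      (tendsto_atTop_add_const_left _ c tendsto_id)).congr' ?_
    filter_upwards [eventually_ge_atTop 0] with t ht using (hxdef t ht).symm
  · have hk' := hk.inv₀ one_ne_zero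
    rw [inv_one] at hk'
    refine hk'.congr' ?_
    filter_upwards [eventually_ge_atTop 0] with t ht
    rw [hxdef t ht, Real.sign_mul_abs_rpow_of_pos (Real.rpow_pos_of_pos (hct t ht) _),
      rpow_neg_div_rpow hβ0.ne' (hct t ht).le, hg t ht,
      div_mul_cancel_left₀ (Real.rpow_pos_of_pos (hct t ht) _).ne']
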